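/- arXiv:2410.08796 — 5 statements merged into one kernel-verified Lean document; each statement's English description precedes it below -/
import Mathlib

section
/- With C̄ positive definite, V a d'×r matrix, Σ_C positive definite, Σ = Σ_C⁻¹ + Vᵀ C̄⁻¹ V, C̃ = C̄ + V Σ_C Vᵀ, and P = C̄⁻¹ V Σ⁻¹ Vᵀ, one has (I − P) C̄⁻¹ (I − P)ᵀ + C̄⁻¹ V Σ⁻¹ Σ_C⁻¹ Σ⁻¹ Vᵀ C̄⁻¹ = C̃⁻¹. -/
/-!
By the Woodbury identity, `C̃⁻¹ = C̄⁻¹ - C̄⁻¹ V Σ⁻¹ Vᵀ C̄⁻¹`. Expanding the left-hand side, the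
quadratic term in `P` and the `Σ_C⁻¹` term combine into `C̄⁻¹ V Σ⁻¹ (Vᵀ C̄⁻¹ V + Σ_C⁻¹) Σ⁻¹ Vᵀ C̄⁻¹`,
which collapses to `C̄⁻¹ V Σ⁻¹ Vᵀ C̄⁻¹` because the middle factor is `Σ`.
-/

open Matrix

section

variable {R m n : Type*} [CommRing R] [Fintype m] [Fintype n] [DecidableEq m] [DecidableEq n]

theorem one_sub_mul_mul_one_sub_transpose_add_eq {A : Matrix m m R} {V : Matrix m n R}
    {S T : Matrix n n R} (hA : Aᵀ = A) (hS : Sᵀ = S) (hST : S * (T + Vᵀ * A * V) = 1) :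
    (1 - A * V * S * Vᵀ) * A * (1 - A * V * S * Vᵀ)ᵀ + A * V * S * T * S * Vᵀ * A =
      A - A * V * S * Vᵀ * A := by
  set B := A * V * S * Vᵀ
  have hBt : A * Bᵀ = B * A := by
    simp only [B, transpose_mul, transpose_transpose, hA, hS, Matrix.mul_assoc]
  have hquad : B * A * Bᵀ + A * V * S * T * S * Vᵀ * A = B * A := by
    calc B * A * Bᵀ + A * V * S * T * S * Vᵀ * A
        = A * V * (S * (T + Vᵀ * A * V)) * S * Vᵀ * A := by
          rw [Matrix.mul_assoc B A, hBt]
          simp only [B, Matrix.mul_add, Matrix.add_mul, Matrix.mul_assoc]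
          abel
      _ = B * A := by rw [hST, Matrix.mul_one]
  calc (1 - B) * A * (1 - B)ᵀ + A * V * S * T * S * Vᵀ * A
      = A - A * Bᵀ - B * A + (B * A * Bᵀ + A * V * S * T * S * Vᵀ * A) := by
        rw [transpose_sub, transpose_one]; noncomm_ring
    _ = A - B * A := by rw [hquad, hBt]; abel

end

theorem stmt_11 {d' r : ℕ} (Cbar : Matrix (Fin d') (Fin d') ℝ)
    (V : Matrix (Fin d') (Fin r) ℝ) (Sc : Matrix (Fin r) (Fin r) ℝ)
    (hC : Cbar.PosDef) (hSc : Sc.PosDef)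
    (Ct : Matrix (Fin d') (Fin d') ℝ) (hCt : Ct = Cbar + V * Sc * Vᵀ)
    (Sm : Matrix (Fin r) (Fin r) ℝ) (hSm : Sm = Sc⁻¹ + Vᵀ * Cbar⁻¹ * V)
    (P : Matrix (Fin d') (Fin d') ℝ) (hP : P = Cbar⁻¹ * V * Sm⁻¹ * Vᵀ) :
    (1 - P) * Cbar⁻¹ * (1 - P)ᵀ +
        Cbar⁻¹ * V * Sm⁻¹ * Sc⁻¹ * Sm⁻¹ * Vᵀ * Cbar⁻¹ = Ct⁻¹ := by
  have hSmPD : Sm.PosDef := by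
    rw [hSm]
    refine hSc.inv.add_posSemidef ?_
    simpa using hC.inv.posSemidef.conjTranspose_mul_mul_same V
  have hSmInv : Sm⁻¹ * (Sc⁻¹ + Vᵀ * Cbar⁻¹ * V) = 1 := by
    rw [← hSm]; exact nonsing_inv_mul _ ((isUnit_iff_isUnit_det _).mp hSmPD.isUnit)
  subst hCt hP
  rw [add_mul_mul_inv_eq_sub _ _ _ _ hC.isUnit hSc.isUnit (hSm ▸ hSmPD.isUnit), ← hSm]
  exact one_sub_mul_mul_one_sub_transpose_add_eq hC.isHermitian.inv.eq hSmPD.isHermitian.inv.eq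
    hSmInv
end

section
/- Marginal prior correctness for CAGP: if f(X) has covariance K with itself, ζ ~ N(0, σ²G⁻²) independent of f where G = K + σ²I, and v = G⁻¹(f(X) − m₀(X)) + ζ, then v ~ N(0, G⁻¹). -/
/-!
Covariance of square-integrable random vectors is bilinear and `Cov(AX, Y) = A Cov(X, Y)`, so
`Cov(G⁻¹ w + ζ) = G⁻¹ K G⁻¹ᵀ + Cov(ζ)`, the cross terms vanishing because `w` and `ζ` are
uncorrelated. Since `K` is a covariance matrix it is symmetric, hence so are `G` and `G⁻¹`, and
`G⁻¹ K G⁻¹ + σ² G⁻¹ G⁻¹ = G⁻¹ G G⁻¹ = G⁻¹`.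
-/

open Matrix MeasureTheory

noncomputable def cov {Ω : Type*} [MeasurableSpace Ω] (μ : Measure Ω)
    {n m : Type*} (X : Ω → n → ℝ) (Y : Ω → m → ℝ) : Matrix n m ℝ :=
  Matrix.of fun i j =>
    ∫ ω, (X ω i - ∫ ω', X ω' i ∂μ) * (Y ω j - ∫ ω', Y ω' j ∂μ) ∂μ

-- No invertibility hypothesis: for singular `A` both sides are the junk value `0`.
theorem Matrix.nonsing_inv_mul_mul_nonsing_inv {n α : Type*} [Fintype n] [DecidableEq n]
    [CommRing α] (A : Matrix n n α) : A⁻¹ * A * A⁻¹ = A⁻¹ := by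
  by_cases hA : IsUnit A.det
  · rw [nonsing_inv_mul A hA, Matrix.one_mul]
  · simp [nonsing_inv_apply_not_isUnit A hA]

section Covariance

variable {Ω : Type*} [MeasurableSpace Ω] {μ : Measure Ω} {n m p : Type*}

theorem cov_transpose (X : Ω → n → ℝ) (Y : Ω → m → ℝ) : (cov μ X Y)ᵀ = cov μ Y X := by
  ext i j
  simp only [cov, transpose_apply, of_apply, mul_comm]

theorem memLp_mulVec_apply [Fintype n] {q : ENNReal} {X : Ω → n → ℝ}
    (hX : ∀ k, MemLp (fun ω => X ω k) q μ) (A : Matrix m n ℝ) (i : m) :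
    MemLp (fun ω => (A *ᵥ X ω) i) q μ := by
  simp only [mulVec, dotProduct]
  exact memLp_finsetSum _ fun k _ => (hX k).const_mul _

theorem integral_mulVec_apply [Fintype n] {X : Ω → n → ℝ}
    (hX : ∀ k, Integrable (fun ω => X ω k) μ) (A : Matrix m n ℝ) (i : m) :
    ∫ ω, (A *ᵥ X ω) i ∂μ = (A *ᵥ fun k => ∫ ω, X ω k ∂μ) i := by
  simp only [mulVec, dotProduct]
  rw [integral_finsetSum _ fun k _ => (hX k).const_mul _]
  simp only [integral_const_mul]

variable [IsFiniteMeasure μ]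

theorem integrable_centered_mul {f g : Ω → ℝ} (hf : MemLp f 2 μ) (hg : MemLp g 2 μ) :
    Integrable (fun ω => (f ω - ∫ ω', f ω' ∂μ) * (g ω - ∫ ω', g ω' ∂μ)) μ :=
  (hf.sub (memLp_const _)).integrable_mul (hg.sub (memLp_const _))

theorem cov_add_left {X₁ X₂ : Ω → n → ℝ} {Y : Ω → m → ℝ}
    (hX₁ : ∀ i, MemLp (fun ω => X₁ ω i) 2 μ) (hX₂ : ∀ i, MemLp (fun ω => X₂ ω i) 2 μ)
    (hY : ∀ j, MemLp (fun ω => Y ω j) 2 μ) :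
    cov μ (fun ω => X₁ ω + X₂ ω) Y = cov μ X₁ Y + cov μ X₂ Y := by
  ext i j
  simp only [cov, Matrix.add_apply, of_apply, Pi.add_apply]
  rw [← integral_add (integrable_centered_mul (hX₁ i) (hY j))
    (integrable_centered_mul (hX₂ i) (hY j)),
    integral_add ((hX₁ i).integrable one_le_two) ((hX₂ i).integrable one_le_two)]
  congr 1 with ω
  ring

theorem cov_add_right {X : Ω → n → ℝ} {Y₁ Y₂ : Ω → m → ℝ}
    (hX : ∀ i, MemLp (fun ω => X ω i) 2 μ)
    (hY₁ : ∀ j, MemLp (fun ω => Y₁ ω j) 2 μ) (hY₂ : ∀ j, MemLp (fun ω => Y₂ ω j) 2 μ) :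
    cov μ X (fun ω => Y₁ ω + Y₂ ω) = cov μ X Y₁ + cov μ X Y₂ := by
  rw [← cov_transpose, cov_add_left hY₁ hY₂ hX, transpose_add, cov_transpose, cov_transpose]

theorem cov_mulVec_left [Fintype n] {X : Ω → n → ℝ} {Y : Ω → p → ℝ}
    (hX : ∀ k, MemLp (fun ω => X ω k) 2 μ) (hY : ∀ j, MemLp (fun ω => Y ω j) 2 μ)
    (A : Matrix m n ℝ) :
    cov μ (fun ω => A *ᵥ X ω) Y = A * cov μ X Y := by
  ext i j
  simp only [cov, of_apply, mul_apply]
  rw [integral_mulVec_apply (fun k => (hX k).integrable one_le_two)]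
  simp only [← integral_const_mul]
  rw [← integral_finsetSum _ fun k _ => (integrable_centered_mul (hX k) (hY j)).const_mul _]
  congr 1 with ω
  simp only [mulVec, dotProduct, ← Finset.sum_sub_distrib, Finset.sum_mul, ← mul_sub, mul_assoc]

theorem cov_mulVec_right [Fintype m] {X : Ω → n → ℝ} {Y : Ω → m → ℝ}
    (hX : ∀ i, MemLp (fun ω => X ω i) 2 μ) (hY : ∀ k, MemLp (fun ω => Y ω k) 2 μ)
    (B : Matrix p m ℝ) :
    cov μ X (fun ω => B *ᵥ Y ω) = cov μ X Y * Bᵀ := by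
  rw [← cov_transpose, cov_mulVec_left hY hX, transpose_mul, cov_transpose]

end Covariance

theorem stmt_14_general {Ω : Type*} [MeasurableSpace Ω] (μ : Measure Ω)
    [IsProbabilityMeasure μ] {d : ℕ}
    (w ζ : Ω → Fin d → ℝ)
    (hw2 : ∀ i, MemLp (fun ω => w ω i) 2 μ)
    (hζ2 : ∀ i, MemLp (fun ω => ζ ω i) 2 μ)
    (K G : Matrix (Fin d) (Fin d) ℝ) (σ : ℝ)
    (hG : G = K + σ ^ 2 • (1 : Matrix (Fin d) (Fin d) ℝ))
    (hwmean : ∀ i, ∫ ω, w ω i ∂μ = 0)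
    (hζmean : ∀ i, ∫ ω, ζ ω i ∂μ = 0)
    (hwcov : cov μ w w = K)
    (hζcov : cov μ ζ ζ = σ ^ 2 • (G⁻¹ * G⁻¹))
    (hindep : cov μ w ζ = 0)
    (v : Ω → Fin d → ℝ) (hv : ∀ ω, v ω = G⁻¹.mulVec (w ω) + ζ ω) :
    (∀ i, ∫ ω, v ω i ∂μ = 0) ∧ cov μ v v = G⁻¹ := by
  have hGw2 := memLp_mulVec_apply hw2 G⁻¹
  have hv2 : ∀ i, MemLp (fun ω => (G⁻¹ *ᵥ w ω + ζ ω) i) 2 μ := fun i => (hGw2 i).add (hζ2 i)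
  have hGsymm : G⁻¹ᵀ = G⁻¹ := by
    rw [transpose_nonsing_inv, hG, transpose_add, ← hwcov, cov_transpose, transpose_smul,
      transpose_one]
  refine ⟨fun i => ?_, ?_⟩
  · simp only [hv, Pi.add_apply]
    rw [integral_add ((hGw2 i).integrable one_le_two) ((hζ2 i).integrable one_le_two),
      integral_mulVec_apply (fun k => (hw2 k).integrable one_le_two)]
    simp only [hwmean, hζmean, ← Pi.zero_def, mulVec_zero, Pi.zero_apply, add_zero]
  · rw [show v = fun ω => G⁻¹ *ᵥ w ω + ζ ω from funext hv]
    calc cov μ (fun ω => G⁻¹ *ᵥ w ω + ζ ω) (fun ω => G⁻¹ *ᵥ w ω + ζ ω)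
        = G⁻¹ * K * G⁻¹ + σ ^ 2 • (G⁻¹ * G⁻¹) := by
          rw [cov_add_left hGw2 hζ2 hv2, cov_add_right hGw2 hGw2 hζ2,
            cov_add_right hζ2 hGw2 hζ2, cov_mulVec_left hw2 hGw2, cov_mulVec_right hw2 hw2,
            cov_mulVec_left hw2 hζ2, cov_mulVec_right hζ2 hw2, ← cov_transpose w ζ, hindep,
            hwcov, hζcov, hGsymm]
          simp only [mul_zero, add_zero, transpose_zero, zero_mul, zero_add, Matrix.mul_assoc]
      _ = G⁻¹ * G * G⁻¹ := by
          rw [hG, Matrix.mul_add, Matrix.add_mul, Matrix.mul_smul, Matrix.smul_mul, Matrix.mul_one]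
      _ = G⁻¹ := G.nonsing_inv_mul_mul_nonsing_inv

/-- Marginal prior correctness for CAGP: with `w = f(X) - m₀(X)` having mean `0` and
covariance `K`, and `ζ` a mean-zero noise with covariance `σ² G⁻²` uncorrelated with `w`
(e.g. independent of `f`), the vector `v = G⁻¹ w + ζ` has mean `0` and covariance `G⁻¹`. -/
theorem stmt_14 {Ω : Type*} [MeasurableSpace Ω] (μ : Measure Ω)
    [IsProbabilityMeasure μ] {d : ℕ}
    (w ζ : Ω → Fin d → ℝ)
    (hw2 : ∀ i, MemLp (fun ω => w ω i) 2 μ)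
    (hζ2 : ∀ i, MemLp (fun ω => ζ ω i) 2 μ)
    (K G : Matrix (Fin d) (Fin d) ℝ) (σ : ℝ) (hσ : 0 < σ)
    (hK : K.PosSemidef) (hG : G = K + σ ^ 2 • (1 : Matrix (Fin d) (Fin d) ℝ))
    (hwmean : ∀ i, ∫ ω, w ω i ∂μ = 0)
    (hζmean : ∀ i, ∫ ω, ζ ω i ∂μ = 0)
    (hwcov : cov μ w w = K)
    (hζcov : cov μ ζ ζ = σ ^ 2 • (G⁻¹ * G⁻¹))
    (hindep : cov μ w ζ = 0)
    (v : Ω → Fin d → ℝ) (hv : ∀ ω, v ω = G⁻¹.mulVec (w ω) + ζ ω) :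
    (∀ i, ∫ ω, v ω i ∂μ = 0) ∧ cov μ v v = G⁻¹ :=
  stmt_14_general μ w ζ hw2 hζ2 K G σ hG hwmean hζmean hwcov hζcov hindep v hv
end

section
/- If S is a d×m matrix with linearly independent columns and G is symmetric positive definite, then D = S (Sᵀ G S)⁻¹ Sᵀ satisfies G⁻¹ − D is positive semidefinite, and (G⁻¹ − D) G S = 0, i.e., the columns of GS lie in the null space of the Bayesian PLS posterior covariance. -/
/-!
The block matrix `[S G⁻¹]ᴴ G [S G⁻¹] = [[SᴴGS, Sᴴ], [S, G⁻¹]]` is positive semidefinite, and since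
its upper-left block `SᴴGS` is positive definite, so is its Schur complement
`G⁻¹ - S (SᴴGS)⁻¹ Sᴴ`. The identity `(G⁻¹ - S (SᴴGS)⁻¹ Sᴴ) G S = S - S = 0` is pure algebra.
-/

open Matrix

namespace Matrix

variable {n m : Type*}

theorem mulVec_injective_of_rank_eq_card [Fintype m] {K : Type*} [Field K] {S : Matrix n m K}
    (hS : S.rank = Fintype.card m) : Function.Injective S.mulVec := by
  have hker : Module.finrank K (LinearMap.ker S.mulVecLin) = 0 := by
    have := LinearMap.finrank_range_add_finrank_ker S.mulVecLin
    change S.rank + _ = _ at this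
    rw [Module.finrank_fintype_fun_eq_card, hS] at this
    omega
  rw [Submodule.finrank_eq_zero, LinearMap.ker_eq_bot] at hker
  exact hker

variable [Fintype n] [DecidableEq n]

theorem inv_sub_mul_inv_mul_mul_mul_eq_zero [Fintype m] [DecidableEq m] {R : Type*} [CommRing R]
    {G : Matrix n n R} (hG : IsUnit G.det) (S : Matrix n m R) (T : Matrix m n R)
    (hTGS : IsUnit (T * G * S).det) :
    (G⁻¹ - S * (T * G * S)⁻¹ * T) * (G * S) = 0 := by
  rw [Matrix.sub_mul, ← Matrix.mul_assoc, nonsing_inv_mul _ hG, Matrix.one_mul,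
    Matrix.mul_assoc _ T, ← Matrix.mul_assoc T, Matrix.mul_assoc S,
    nonsing_inv_mul _ hTGS, Matrix.mul_one, sub_self]

theorem IsHermitian.conjTranspose_fromCols_mul_mul_fromCols_inv {R : Type*} [CommRing R]
    [StarRing R] {G : Matrix n n R} (hG : G.IsHermitian) (hGdet : IsUnit G.det)
    (S : Matrix n m R) :
    (fromCols S G⁻¹)ᴴ * G * fromCols S G⁻¹ = Matrix.fromBlocks (Sᴴ * G * S) Sᴴ S G⁻¹ := by
  rw [conjTranspose_fromCols_eq_fromRows_conjTranspose, fromRows_mul, fromRows_mul_fromCols,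
    hG.inv.eq, mul_nonsing_inv_cancel_right _ _ hGdet, nonsing_inv_mul _ hGdet,
    Matrix.one_mul, Matrix.one_mul]

theorem PosDef.posSemidef_inv_sub_mul_inv_mul_mul_conjTranspose [Fintype m] [DecidableEq m]
    {𝕜 : Type*} [Field 𝕜] [PartialOrder 𝕜] [StarRing 𝕜] [StarOrderedRing 𝕜] {G : Matrix n n 𝕜}
    (hG : G.PosDef) {S : Matrix n m 𝕜} (hSGS : (Sᴴ * G * S).PosDef) :
    (G⁻¹ - S * (Sᴴ * G * S)⁻¹ * Sᴴ).PosSemidef := by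
  have := hSGS.isUnit.invertible
  have hblocks : (Matrix.fromBlocks (Sᴴ * G * S) Sᴴ Sᴴᴴ G⁻¹).PosSemidef := by
    rw [conjTranspose_conjTranspose,
      ← hG.1.conjTranspose_fromCols_mul_mul_fromCols_inv (hG.isUnit.map detMonoidHom)]
    exact hG.posSemidef.conjTranspose_mul_mul_same _
  simpa only [conjTranspose_conjTranspose] using (hSGS.fromBlocks₁₁ Sᴴ G⁻¹).mp hblocks

end Matrix

theorem stmt_15_general {d m : ℕ} (G : Matrix (Fin d) (Fin d) ℝ) (hG : G.PosDef)
    (S : Matrix (Fin d) (Fin m) ℝ) (hS : S.rank = m)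
    (D : Matrix (Fin d) (Fin d) ℝ) (hD : D = S * (Sᵀ * G * S)⁻¹ * Sᵀ) :
    (G⁻¹ - D).PosSemidef ∧ (G⁻¹ - D) * (G * S) = 0 := by
  have hSGS : (Sᴴ * G * S).PosDef :=
    hG.conjTranspose_mul_mul_same (mulVec_injective_of_rank_eq_card (by rwa [Fintype.card_fin]))
  rw [← conjTranspose_eq_transpose_of_trivial] at hD
  subst hD
  exact ⟨hG.posSemidef_inv_sub_mul_inv_mul_mul_conjTranspose hSGS,
    inv_sub_mul_inv_mul_mul_mul_eq_zero (hG.isUnit.map detMonoidHom) S Sᴴ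
      (hSGS.isUnit.map detMonoidHom)⟩

theorem stmt_15 {d m : ℕ} (G : Matrix (Fin d) (Fin d) ℝ) (hG : G.PosDef)
    (hGsymm : G.IsSymm) (S : Matrix (Fin d) (Fin m) ℝ) (hS : S.rank = m)
    (D : Matrix (Fin d) (Fin d) ℝ) (hD : D = S * (Sᵀ * G * S)⁻¹ * Sᵀ) :
    (G⁻¹ - D).PosSemidef ∧ (G⁻¹ - D) * (G * S) = 0 :=
  stmt_15_general G hG S hS D hD
end

section
/- The Bayesian PLS posterior covariance G⁻¹ − S(SᵀGS)⁻¹Sᵀ has rank d − m when S is d×m of rank m and G is symmetric positive definite. -/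
open Matrix

/-!
With `A = SᵀGS`, positive definite because `S` is injective, the covariance factors as
`G⁻¹ (1 - P R)` with `P = G S` and `R = A⁻¹ Sᵀ`. Since `R P = 1`, the matrix `P R` is an
idempotent of rank `m`, so its complement `1 - P R` has rank `d - m`, and the invertible
factor `G⁻¹` does not change the rank.
-/

namespace Matrix

variable {m n K : Type*} [Fintype n] [Field K]

theorem rank_add_le {l : Type*} (A B : Matrix l n K) : (A + B).rank ≤ A.rank + B.rank := by
  rw [rank, rank, rank, mulVecLin_add]
  have hle : LinearMap.range (A.mulVecLin + B.mulVecLin) ≤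
      LinearMap.range A.mulVecLin ⊔ LinearMap.range B.mulVecLin := by
    rintro _ ⟨x, rfl⟩
    exact Submodule.add_mem_sup ⟨x, rfl⟩ ⟨x, rfl⟩
  exact (Submodule.finrank_mono hle).trans (Submodule.finrank_add_le_finrank_add_finrank _ _)

theorem mulVec_injective_of_rank_eq_card_s16 {A : Matrix m n K} (h : A.rank = Fintype.card n) :
    Function.Injective A.mulVec := by
  rw [mulVec_injective_iff, linearIndependent_iff_card_eq_finrank_span, Set.finrank,
    ← rank_eq_finrank_span_cols, h]

theorem rank_add_rank_one_sub_of_isIdempotentElem [DecidableEq n] {Q : Matrix n n K}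
    (hQ : IsIdempotentElem Q) : Q.rank + (1 - Q).rank = Fintype.card n := by
  refine le_antisymm (rank_add_rank_le_card_of_mul_eq_zero hQ.mul_one_sub_self) ?_
  calc Fintype.card n = (Q + (1 - Q)).rank := by rw [add_sub_cancel, rank_one]
    _ ≤ Q.rank + (1 - Q).rank := rank_add_le _ _

theorem rank_one_sub_mul_of_mul_eq_one [Fintype m] [DecidableEq n] [DecidableEq m]
    {P : Matrix n m K} {R : Matrix m n K} (hRP : R * P = 1) :
    (1 - P * R).rank = Fintype.card n - Fintype.card m := by
  have hidem : IsIdempotentElem (P * R) := by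
    rw [IsIdempotentElem, Matrix.mul_assoc, ← Matrix.mul_assoc R, hRP, Matrix.one_mul]
  have hrank : (P * R).rank = Fintype.card m := by
    refine le_antisymm ((rank_mul_le_right _ _).trans (rank_le_card_height R)) ?_
    calc Fintype.card m = (R * (P * R) * P).rank := by
          rw [← Matrix.mul_assoc R P R, hRP, Matrix.one_mul, hRP, rank_one]
      _ ≤ (P * R).rank := (rank_mul_le_left _ _).trans (rank_mul_le_right _ _)
  have := rank_add_rank_one_sub_of_isIdempotentElem hidem
  omega

end Matrix

theorem stmt_16_general {d m : ℕ} (G : Matrix (Fin d) (Fin d) ℝ) (hG : G.PosDef)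
    (S : Matrix (Fin d) (Fin m) ℝ) (hS : S.rank = m) :
    (G⁻¹ - S * (Sᵀ * G * S)⁻¹ * Sᵀ).rank = d - m := by
  set A := Sᵀ * G * S
  have hGdet : IsUnit G.det := (isUnit_iff_isUnit_det G).mp hG.isUnit
  have hA : A.PosDef := by
    simpa only [conjTranspose_eq_transpose_of_trivial] using
      hG.conjTranspose_mul_mul_same (mulVec_injective_of_rank_eq_card_s16 (by simpa using hS))
  have hRP : (A⁻¹ * Sᵀ) * (G * S) = 1 := by
    rw [Matrix.mul_assoc, ← Matrix.mul_assoc Sᵀ]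
    exact nonsing_inv_mul A ((isUnit_iff_isUnit_det A).mp hA.isUnit)
  have hfactor : G⁻¹ - S * A⁻¹ * Sᵀ = G⁻¹ * (1 - G * S * (A⁻¹ * Sᵀ)) := by
    simp only [Matrix.mul_sub, Matrix.mul_one, Matrix.mul_assoc]
    rw [← Matrix.mul_assoc G⁻¹ G, nonsing_inv_mul G hGdet, Matrix.one_mul]
  rw [hfactor, rank_mul_eq_right_of_isUnit_det _ _ (isUnit_nonsing_inv_det G hGdet),
    rank_one_sub_mul_of_mul_eq_one hRP, Fintype.card_fin, Fintype.card_fin]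

theorem stmt_16 {d m : ℕ} (G : Matrix (Fin d) (Fin d) ℝ) (hG : G.PosDef)
    (hGsymm : G.IsSymm) (S : Matrix (Fin d) (Fin m) ℝ) (hS : S.rank = m)
    (hm : m ≤ d) :
    (G⁻¹ - S * (Sᵀ * G * S)⁻¹ * Sᵀ).rank = d - m :=
  stmt_16_general G hG S hS
end

section
/- For the Gauss-Seidel iteration on a symmetric positive definite matrix G = L + U (L the lower triangular part, U the strict upper triangular part), with v* = G⁻¹b and iterates v_m = −L⁻¹U v_{m−1} + L⁻¹b from v₀ = 0, we have v_m → v* as m → ∞. -/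
/-!
Householder–John argument. Write `G = L + U` and `M = -L⁻¹U = 1 - L⁻¹G`, so that the error
`v_m - G⁻¹b` is multiplied by `M` at each step. For the energy `E x = xᵀGx` one has
`E x - E (M x) = wᵀ(L + Lᵀ - G)w` with `w = L⁻¹Gx`, and for Gauss–Seidel `L + Lᵀ - G` is the
(positive) diagonal of `G`; hence `E` strictly decreases along `M`. Since `E` is quadratic,
compactness of the unit sphere upgrades this to `E (M x) ≤ r E x` for some `r < 1`, and the error
tends to zero geometrically.
-/

open Matrix Filter Metric Topology

section Lyapunov

variable {E : Type*} [NormedAddCommGroup E] [NormedSpace ℝ E] [FiniteDimensional ℝ E]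

theorem exists_ne_zero_forall_mul_le_mul [Nontrivial E] {φ ψ : E → ℝ}
    (hφ : Continuous φ) (hψ : Continuous ψ)
    (hφ₂ : ∀ (t : ℝ) x, φ (t • x) = t ^ 2 * φ x) (hψ₂ : ∀ (t : ℝ) x, ψ (t • x) = t ^ 2 * ψ x)
    (hψ_pos : ∀ x ≠ 0, 0 < ψ x) :
    ∃ x₀ ≠ 0, ∀ x, φ x * ψ x₀ ≤ φ x₀ * ψ x := by
  have h_sphere : ∀ x ∈ sphere (0 : E) 1, x ≠ 0 := fun x hx => ne_zero_of_mem_unit_sphere ⟨x, hx⟩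
  obtain ⟨x₀, hx₀, hmax⟩ := (isCompact_sphere (0 : E) 1).exists_isMaxOn (f := fun x => φ x / ψ x)
    (NormedSpace.sphere_nonempty.2 zero_le_one)
    (hφ.continuousOn.div hψ.continuousOn fun x hx => (hψ_pos x (h_sphere x hx)).ne')
  refine ⟨x₀, h_sphere x₀ hx₀, fun x => ?_⟩
  rcases eq_or_ne x 0 with rfl | hx
  · simp [by simpa using hφ₂ 0 0, by simpa using hψ₂ 0 0]
  -- the ratio `φ / ψ` is invariant under scaling, so its maximum on the sphere is a global one
  have hu : ‖x‖⁻¹ • x ∈ sphere (0 : E) 1 := by simp [norm_smul, hx]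
  have := isMaxOn_iff.1 hmax _ hu
  rw [hφ₂, hψ₂, mul_div_mul_left _ _ (by positivity),
    div_le_div_iff₀ (hψ_pos x hx) (hψ_pos x₀ (h_sphere x₀ hx₀))] at this
  exact this

theorem exists_lt_one_forall_le_mul [Nontrivial E] {φ ψ : E → ℝ}
    (hφ : Continuous φ) (hψ : Continuous ψ)
    (hφ₂ : ∀ (t : ℝ) x, φ (t • x) = t ^ 2 * φ x) (hψ₂ : ∀ (t : ℝ) x, ψ (t • x) = t ^ 2 * ψ x)
    (hφ_nonneg : ∀ x, 0 ≤ φ x) (hφψ : ∀ x ≠ 0, φ x < ψ x) :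
    ∃ r, 0 ≤ r ∧ r < 1 ∧ ∀ x, φ x ≤ r * ψ x := by
  have hψ_pos : ∀ x ≠ 0, 0 < ψ x := fun x hx => (hφ_nonneg x).trans_lt (hφψ x hx)
  obtain ⟨x₀, hx₀, h⟩ := exists_ne_zero_forall_mul_le_mul hφ hψ hφ₂ hψ₂ hψ_pos
  refine ⟨φ x₀ / ψ x₀, div_nonneg (hφ_nonneg x₀) (hψ_pos x₀ hx₀).le,
    (div_lt_one (hψ_pos x₀ hx₀)).2 (hφψ x₀ hx₀), fun x => ?_⟩
  rw [div_mul_eq_mul_div, le_div_iff₀ (hψ_pos x₀ hx₀)]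
  exact h x

theorem exists_forall_sq_norm_le_mul [Nontrivial E] {f : E → ℝ} (hf : Continuous f)
    (hf₂ : ∀ (t : ℝ) x, f (t • x) = t ^ 2 * f x) (hf_pos : ∀ x ≠ 0, 0 < f x) :
    ∃ C, ∀ x, ‖x‖ ^ 2 ≤ C * f x := by
  obtain ⟨x₀, hx₀, h⟩ := exists_ne_zero_forall_mul_le_mul (φ := fun x => ‖x‖ ^ 2)
    (continuous_norm.pow 2) hf
    (fun t x => by rw [norm_smul, mul_pow, Real.norm_eq_abs, sq_abs]) hf₂ hf_pos
  refine ⟨‖x₀‖ ^ 2 / f x₀, fun x => ?_⟩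
  rw [div_mul_eq_mul_div, le_div_iff₀ (hf_pos x₀ hx₀)]
  exact h x

theorem tendsto_nhds_zero_of_lyapunov {T : E →ₗ[ℝ] E} {f : E → ℝ} (hf : Continuous f)
    (hf₂ : ∀ (t : ℝ) x, f (t • x) = t ^ 2 * f x) (hf_pos : ∀ x ≠ 0, 0 < f x)
    (hT : ∀ x ≠ 0, f (T x) < f x) {e : ℕ → E} (he : ∀ k, e (k + 1) = T (e k)) :
    Tendsto e atTop (𝓝 0) := by
  rcases subsingleton_or_nontrivial E with hE | hE
  · exact tendsto_const_nhds.congr fun k => Subsingleton.elim _ _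
  have hf_nonneg : ∀ x, 0 ≤ f x := fun x => by
    rcases eq_or_ne x 0 with rfl | hx
    · simpa using (hf₂ 0 0).ge
    · exact (hf_pos x hx).le
  obtain ⟨r, hr₀, hr₁, hr⟩ := exists_lt_one_forall_le_mul
    (hf.comp T.continuous_of_finiteDimensional) hf (fun t x => by simp [hf₂]) hf₂
    (fun x => hf_nonneg (T x)) hT
  obtain ⟨C, hC⟩ := exists_forall_sq_norm_le_mul hf hf₂ hf_pos
  have hfe : ∀ k, f (e k) ≤ r ^ k * f (e 0) := by
    intro k
    induction k with
    | zero => simp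
    | succ k ih => calc
        f (e (k + 1)) ≤ r * f (e k) := he k ▸ hr (e k)
        _ ≤ r * (r ^ k * f (e 0)) := by gcongr
        _ = r ^ (k + 1) * f (e 0) := by ring
  have hfe_lim : Tendsto (fun k => f (e k)) atTop (𝓝 0) :=
    squeeze_zero (fun k => hf_nonneg _) hfe
      (by simpa using (tendsto_pow_atTop_nhds_zero_of_lt_one hr₀ hr₁).mul_const (f (e 0)))
  have hsq : Tendsto (fun k => ‖e k‖ ^ 2) atTop (𝓝 0) :=
    squeeze_zero (fun k => sq_nonneg _) (fun k => hC (e k)) (by simpa using hfe_lim.const_mul C)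
  exact tendsto_zero_iff_norm_tendsto_zero.2 (by simpa using hsq.sqrt)

end Lyapunov

section Splitting

variable {n : Type*} [Fintype n]

theorem dotProduct_mulVec_sub_of_mulVec_eq {G L : Matrix n n ℝ} (hG : G.IsSymm) {x y : n → ℝ}
    (hxy : L *ᵥ y = (L - G) *ᵥ x) :
    x ⬝ᵥ G *ᵥ x - y ⬝ᵥ G *ᵥ y = (x - y) ⬝ᵥ (L + Lᵀ - G) *ᵥ (x - y) := by
  have hLw : L *ᵥ (x - y) = G *ᵥ x := by rw [mulVec_sub, hxy, sub_mulVec]; abel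
  have hLt : (x - y) ⬝ᵥ Lᵀ *ᵥ (x - y) = (x - y) ⬝ᵥ L *ᵥ (x - y) := by
    rw [mulVec_transpose, dotProduct_comm, ← dotProduct_mulVec]
  have hG_comm : y ⬝ᵥ G *ᵥ x = x ⬝ᵥ G *ᵥ y := by
    rw [dotProduct_mulVec, ← mulVec_transpose, hG.eq, dotProduct_comm]
  rw [sub_mulVec, add_mulVec, dotProduct_sub, dotProduct_add, hLt, hLw]
  simp only [sub_dotProduct, mulVec_sub, dotProduct_sub]
  linarith

variable [DecidableEq n]

theorem dotProduct_mulVec_lt_of_splitting {G L : Matrix n n ℝ} (hG : G.PosDef)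
    (hL : IsUnit L.det) (hP : (L + Lᵀ - G).PosDef) {x : n → ℝ} (hx : x ≠ 0) :
    ((1 - L⁻¹ * G) *ᵥ x) ⬝ᵥ G *ᵥ ((1 - L⁻¹ * G) *ᵥ x) < x ⬝ᵥ G *ᵥ x := by
  have hLy : L *ᵥ ((1 - L⁻¹ * G) *ᵥ x) = (L - G) *ᵥ x := by
    rw [mulVec_mulVec, mul_sub, mul_one, ← mul_assoc, mul_nonsing_inv _ hL, one_mul]
  have hw : x - (1 - L⁻¹ * G) *ᵥ x = (L⁻¹ * G) *ᵥ x := by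
    rw [sub_mulVec, one_mulVec, sub_sub_cancel]
  have hw_ne : (L⁻¹ * G) *ᵥ x ≠ 0 := by
    have hLG : IsUnit (L⁻¹ * G) :=
      (isUnit_nonsing_inv_iff.2 ((isUnit_iff_isUnit_det L).2 hL)).mul hG.isUnit
    simpa using (mulVec_injective_of_isUnit hLG).ne hx
  have hpos := hP.dotProduct_mulVec_pos hw_ne
  rw [star_trivial, ← hw,
    ← dotProduct_mulVec_sub_of_mulVec_eq (isHermitian_iff_isSymm.1 hG.isHermitian) hLy] at hpos
  linarith

theorem tendsto_splitting_iterate {G L : Matrix n n ℝ} (hG : G.PosDef) (hL : IsUnit L.det)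
    (hP : (L + Lᵀ - G).PosDef) {b : n → ℝ} {v : ℕ → n → ℝ}
    (hv : ∀ m, v (m + 1) = (-(L⁻¹ * (G - L))) *ᵥ v m + L⁻¹ *ᵥ b) :
    Tendsto v atTop (𝓝 (G⁻¹ *ᵥ b)) := by
  have hM : -(L⁻¹ * (G - L)) = 1 - L⁻¹ * G := by rw [mul_sub, nonsing_inv_mul _ hL]; abel
  have hfix : (1 - L⁻¹ * G) *ᵥ (G⁻¹ *ᵥ b) = G⁻¹ *ᵥ b - L⁻¹ *ᵥ b := by
    rw [sub_mulVec, one_mulVec, ← mulVec_mulVec, mulVec_mulVec b G,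
      mul_nonsing_inv _ ((isUnit_iff_isUnit_det G).1 hG.isUnit), one_mulVec]
  have he : Tendsto (fun m => v m - G⁻¹ *ᵥ b) atTop (𝓝 0) := by
    refine tendsto_nhds_zero_of_lyapunov (T := mulVecLin (1 - L⁻¹ * G))
      (f := fun x => x ⬝ᵥ G *ᵥ x) ?_ ?_ ?_
      (fun x hx => dotProduct_mulVec_lt_of_splitting hG hL hP hx) ?_
    · exact continuous_id.dotProduct (continuous_const.matrix_mulVec continuous_id)
    · intro t x
      simp only [mulVec_smul, smul_dotProduct, dotProduct_smul, smul_eq_mul]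
      ring
    · intro x hx
      simpa using hG.dotProduct_mulVec_pos hx
    · intro m
      rw [hv m, hM, mulVecLin_apply, mulVec_sub, hfix]
      abel
  simpa using he.add_const (G⁻¹ *ᵥ b)

end Splitting

section GaussSeidel

variable {n : Type*} [LinearOrder n] {G L : Matrix n n ℝ}

theorem add_transpose_sub_eq_diagonal_of_lowerPart (hG : G.IsSymm)
    (hL : ∀ i j, L i j = if j ≤ i then G i j else 0) :
    L + Lᵀ - G = diagonal fun i => G i i := by
  ext i j
  simp only [Matrix.sub_apply, Matrix.add_apply, transpose_apply, diagonal_apply, hL]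
  rcases lt_trichotomy i j with h | rfl | h
  · simp [h.ne, h.not_ge, h.le, hG.apply i j]
  · simp
  · simp [h.ne', h.not_ge, h.le]

theorem det_pos_of_lowerPart [Fintype n] (hG : G.PosDef)
    (hL : ∀ i j, L i j = if j ≤ i then G i j else 0) : 0 < L.det := by
  rw [det_of_isLowerTriangular L fun i j hij => by
    simp [hL, (OrderDual.toDual_lt_toDual.1 hij).not_ge]]
  exact Finset.prod_pos fun i _ => by simpa [hL] using hG.diag_pos

end GaussSeidel

theorem stmt_18_general {d : ℕ} (G L U : Matrix (Fin d) (Fin d) ℝ)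
    (hG : G.PosDef)
    (hL : ∀ i j : Fin d, L i j = if j ≤ i then G i j else 0)
    (hU : U = G - L)
    (b : Fin d → ℝ)
    (v : ℕ → Fin d → ℝ)
    (hvrec : ∀ m : ℕ, v (m + 1) = (-(L⁻¹ * U)).mulVec (v m) + L⁻¹.mulVec b) :
    Tendsto v atTop (nhds (G⁻¹.mulVec b)) := by
  subst hU
  have hP : (L + Lᵀ - G).PosDef := by
    rw [add_transpose_sub_eq_diagonal_of_lowerPart (isHermitian_iff_isSymm.1 hG.isHermitian) hL]
    exact PosDef.diagonal fun i => hG.diag_pos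
  exact tendsto_splitting_iterate hG (det_pos_of_lowerPart hG hL).ne'.isUnit hP hvrec

theorem stmt_18 {d : ℕ} (G L U : Matrix (Fin d) (Fin d) ℝ)
    (hG : G.PosDef) (hGsymm : G.IsSymm)
    (hL : ∀ i j : Fin d, L i j = if j ≤ i then G i j else 0)
    (hU : U = G - L)
    (b : Fin d → ℝ)
    (v : ℕ → Fin d → ℝ) (hv0 : v 0 = 0)
    (hvrec : ∀ m : ℕ, v (m + 1) = (-(L⁻¹ * U)).mulVec (v m) + L⁻¹.mulVec b) :
    Tendsto v atTop (nhds (G⁻¹.mulVec b)) :=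
  stmt_18_general G L U hG hL hU b v hvrec
end
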